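/- Let M = M₁ ⊕ M₂ be a direct sum of finite-dimensional right A-modules, δ ∈ ℤ^n, and L a submodule of M with δ(dim L) = f_M(δ). Then δ(dim(L ∩ M₁)) = f_{M₁}(δ) and δ(dim(L ∩ M₂)) = f_{M₂}(δ). -/

import Mathlib

/-!  Common setup: tropical F-polynomials and general presentations
for a finite-dimensional basic algebra `A` over `k`, following Fei,
"Tropical F-polynomials and general presentations".
All modules are *right* `A`-modules, encoded as left `Aᵐᵒᵖ`-modules. -/

namespace TropGP

open Module MulOpposite

section Defs

variable (k : Type) [Field k]
variable (A : Type) [Ring A] [Algebra k A]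

/-- The right regular `A`-module structure on `A` is compatible with the `k`-action. -/
instance instTowerOpA : IsScalarTower k Aᵐᵒᵖ A :=
  ⟨fun c b x => by
    rw [MulOpposite.smul_eq_mul_unop, MulOpposite.smul_eq_mul_unop, MulOpposite.unop_smul,
      Algebra.mul_smul_comm]⟩

/-- Shortcut instance: scalars of `k` commute with the right `A`-action. -/
instance (priority := 5000) instSMulCommOpK (M : Type) [AddCommGroup M] [Module k M]
    [Module Aᵐᵒᵖ M] [IsScalarTower k Aᵐᵒᵖ M] : SMulCommClass Aᵐᵒᵖ k M :=
  IsScalarTower.to_smulCommClass'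

variable {n : ℕ} (e : Fin n → A)

/-- Pairing of a weight vector with an integral (dimension) vector. -/
def pz (δ β : Fin n → ℤ) : ℤ := ∑ i, δ i * β i

/-- Pairing of an integral weight vector with a real vector. -/
def przr (δ : Fin n → ℤ) (γ : Fin n → ℝ) : ℝ := ∑ i, (δ i : ℝ) * γ i

/-- Pairing of two real vectors. -/
def prr (δ γ : Fin n → ℝ) : ℝ := ∑ i, δ i * γ i

variable (M : Type) [AddCommGroup M] [Module k M] [Module Aᵐᵒᵖ M] [IsScalarTower k Aᵐᵒᵖ M]

/-- Right multiplication by `e i`, as a `k`-linear endomorphism of a right `A`-module. -/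
noncomputable def rmul (i : Fin n) : M →ₗ[k] M where
  toFun x := op (e i) • x
  map_add' x y := smul_add _ x y
  map_smul' c x := smul_comm _ c x

/-- The dimension vector: `i ↦ dim_k (M eᵢ)`. -/
noncomputable def dimVec : Fin n → ℤ :=
  fun i => (finrank k (LinearMap.range (rmul k A e M i)) : ℤ)

/-- The real dimension vector. -/
noncomputable def dimVecR : Fin n → ℝ :=
  fun i => (finrank k (LinearMap.range (rmul k A e M i)) : ℝ)

/-- The tropical F-polynomial: `f_M(δ) = max { δ(dim L) : L ⊆ M }`. -/
noncomputable def tropF (δ : Fin n → ℤ) : ℤ :=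
  sSup (Set.range fun L : Submodule Aᵐᵒᵖ M => pz δ (dimVec k A e L))

/-- The dual tropical F-polynomial: `f̌_M(δ) = max { δ(dim N) : M ↠ N }`. -/
noncomputable def tropCheck (δ : Fin n → ℤ) : ℤ :=
  sSup (Set.range fun L : Submodule Aᵐᵒᵖ M => pz δ (dimVec k A e (M ⧸ L)))

/-- The Newton polytope of `M`: the convex hull of dimension vectors of submodules. -/
noncomputable def newton : Set (Fin n → ℝ) :=
  convexHull ℝ {x | ∃ L : Submodule Aᵐᵒᵖ M, x = dimVecR k A e L}

/-- The dual Newton polytope of `M`: convex hull of dimension vectors of quotients. -/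
noncomputable def newtonCheck : Set (Fin n → ℝ) :=
  convexHull ℝ {x | ∃ L : Submodule Aᵐᵒᵖ M, x = dimVecR k A e (M ⧸ L)}

/-- King's `δ`-semistability. -/
def IsSemistable (δ : Fin n → ℤ) : Prop :=
  pz δ (dimVec k A e M) = 0 ∧ ∀ L : Submodule Aᵐᵒᵖ M, pz δ (dimVec k A e L) ≤ 0

/-- `δ`-semistability for a real weight. -/
def IsSemistableR (δ : Fin n → ℝ) : Prop :=
  prr δ (dimVecR k A e M) = 0 ∧ ∀ L : Submodule Aᵐᵒᵖ M, prr δ (dimVecR k A e L) ≤ 0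

/-- `δ`-stability. -/
def IsStable (δ : Fin n → ℤ) : Prop :=
  pz δ (dimVec k A e M) = 0 ∧
    ∀ L : Submodule Aᵐᵒᵖ M, L ≠ ⊥ → L ≠ ⊤ → pz δ (dimVec k A e L) < 0

section HomE

variable {P Q : Type} [AddCommGroup P] [Module Aᵐᵒᵖ P] [AddCommGroup Q] [Module Aᵐᵒᵖ Q]

/-- The `k`-linear map `Hom_A(Q, M) → Hom_A(P, M)` induced by `d : P → Q`. -/
noncomputable def homMap (d : P →ₗ[Aᵐᵒᵖ] Q) : (Q →ₗ[Aᵐᵒᵖ] M) →ₗ[k] (P →ₗ[Aᵐᵒᵖ] M) where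
  toFun f := f ∘ₗ d
  map_add' f g := LinearMap.add_comp _ _ _
  map_smul' c f := LinearMap.smul_comp _ _ _

/-- `dim_k Hom(d, M)`: the kernel of the induced map. -/
noncomputable def homNum (d : P →ₗ[Aᵐᵒᵖ] Q) : ℕ :=
  finrank k (LinearMap.ker (homMap k A M d))

/-- `dim_k E(d, M)`: the cokernel of the induced map. -/
noncomputable def eNum (d : P →ₗ[Aᵐᵒᵖ] Q) : ℕ :=
  finrank k ((P →ₗ[Aᵐᵒᵖ] M) ⧸ LinearMap.range (homMap k A M d))

end HomE

/-- The indecomposable projective right module `e i · A`. -/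
abbrev projP (i : Fin n) : Submodule Aᵐᵒᵖ A := Submodule.span Aᵐᵒᵖ {e i}

/-- The projective right module `P(β) = ⊕ᵢ (eᵢA)^{β i}`. -/
abbrev PP (β : Fin n → ℕ) : Type := Π i : Fin n, Fin (β i) → projP A e i

/-- The weight condition `β₊ - β₋ = δ`. -/
def HasWt (βm βp : Fin n → ℕ) (δ : Fin n → ℤ) : Prop :=
  ∀ i, (βp i : ℤ) - (βm i : ℤ) = δ i

/-- The cokernel of a projective presentation. -/
abbrev Coker {βm βp : Fin n → ℕ} (d : PP A e βm →ₗ[Aᵐᵒᵖ] PP A e βp) : Type :=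
  PP A e βp ⧸ LinearMap.range d

/-- `hom(δ, M)`: min of `dim_k Hom(d,M)` over projective presentations `d` of weight `δ`. -/
noncomputable def homWt (δ : Fin n → ℤ) : ℕ :=
  sInf {m : ℕ | ∃ (βm βp : Fin n → ℕ) (d : PP A e βm →ₗ[Aᵐᵒᵖ] PP A e βp),
    HasWt βm βp δ ∧ m = homNum k A M d}

/-- `e(δ, M)`: min of `dim_k E(d,M)` over projective presentations `d` of weight `δ`. -/
noncomputable def eWt (δ : Fin n → ℤ) : ℕ :=
  sInf {m : ℕ | ∃ (βm βp : Fin n → ℕ) (d : PP A e βm →ₗ[Aᵐᵒᵖ] PP A e βp),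
    HasWt βm βp δ ∧ m = eNum k A M d}

/-- The indecomposable left module `A · e i`. -/
abbrev projL (i : Fin n) : Submodule A A := Submodule.span A {e i}

section DualMod

variable (V : Type) [AddCommGroup V] [Module k V] [Module A V] [IsScalarTower k A V]

/-- Left multiplication by `a` as a `k`-linear endomorphism of a left module. -/
noncomputable def lact (a : A) : V →ₗ[k] V where
  toFun x := a • x
  map_add' x y := smul_add a x y
  map_smul' c x := smul_comm a c x

/-- The right `A`-action on the `k`-dual of a left `A`-module. -/
noncomputable instance dualSMul : SMul Aᵐᵒᵖ (V →ₗ[k] k) :=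
  ⟨fun a f => f ∘ₗ lact k A V a.unop⟩

@[simp] lemma dual_smul_apply (a : Aᵐᵒᵖ) (f : V →ₗ[k] k) (x : V) :
    (a • f) x = f (a.unop • x) := rfl

/-- The `k`-dual of a left `A`-module is a right `A`-module. -/
noncomputable instance dualModule : Module Aᵐᵒᵖ (V →ₗ[k] k) :=
  { dualSMul k A V with
    one_smul := fun f => by ext x; simp
    mul_smul := fun a b f => by ext x; simp [mul_smul]
    smul_zero := fun a => by ext x; simp
    smul_add := fun a f g => by ext x; simp
    add_smul := fun a b f => by ext x; simp [add_smul]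
    zero_smul := fun f => by ext x; simp }

instance dualSMulComm : SMulCommClass Aᵐᵒᵖ k (V →ₗ[k] k) :=
  ⟨fun a c f => by ext x; simp⟩

instance dualTower : IsScalarTower k Aᵐᵒᵖ (V →ₗ[k] k) :=
  ⟨fun c a f => by ext x; simp [MulOpposite.unop_smul, smul_assoc]⟩

end DualMod

/-- The indecomposable injective right module `Iᵢ = D(A eᵢ)`,
the `k`-dual of the left module `A eᵢ`. -/
abbrev IP (i : Fin n) : Type := (projL A e i) →ₗ[k] k

/-- The injective right module `I(β) = ⊕ᵢ Iᵢ^{β i}`. -/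
abbrev IM (β : Fin n → ℕ) : Type := Π i : Fin n, Fin (β i) → IP k A e i

section PostMap

variable {I J : Type} [AddCommGroup I] [Module k I] [Module Aᵐᵒᵖ I] [IsScalarTower k Aᵐᵒᵖ I]
variable [AddCommGroup J] [Module k J] [Module Aᵐᵒᵖ J] [IsScalarTower k Aᵐᵒᵖ J]

/-- The `k`-linear map `Hom_A(M, I) → Hom_A(M, J)` induced by `dc : I → J`. -/
noncomputable def postMap (dc : I →ₗ[Aᵐᵒᵖ] J) :
    (M →ₗ[Aᵐᵒᵖ] I) →ₗ[k] (M →ₗ[Aᵐᵒᵖ] J) where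
  toFun f := dc ∘ₗ f
  map_add' f g := LinearMap.comp_add _ _ _
  map_smul' c f := by
    ext x
    simp only [LinearMap.comp_apply, LinearMap.smul_apply, RingHom.id_apply]
    rw [← algebraMap_smul Aᵐᵒᵖ c (f x), LinearMap.map_smul, algebraMap_smul]

end PostMap

/-- `hom(M, δ̌)`: min of `dim_k Hom(M, ď)` over injective presentations `ď` of weight `δ̌`. -/
noncomputable def ihomWt (δc : Fin n → ℤ) : ℕ :=
  sInf {m : ℕ | ∃ (βp βm : Fin n → ℕ) (dc : IM k A e βp →ₗ[Aᵐᵒᵖ] IM k A e βm),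
    HasWt βm βp δc ∧ m = finrank k (LinearMap.ker (postMap k A M dc))}

/-- `ě(M, δ̌)`: min of `dim_k Ě(M, ď)` over injective presentations `ď` of weight `δ̌`. -/
noncomputable def ieWt (δc : Fin n → ℤ) : ℕ :=
  sInf {m : ℕ | ∃ (βp βm : Fin n → ℕ) (dc : IM k A e βp →ₗ[Aᵐᵒᵖ] IM k A e βm),
    HasWt βm βp δc ∧
      m = Module.finrank k (@HasQuotient.Quotient _ _ Submodule.hasQuotient
        (LinearMap.range (postMap k A M dc)))}

/-- `e(δ, δ) = 0`: there are projective presentations `d, d'` of weight `δ` with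
`E(d, Coker d') = 0`, i.e. the induced map on `Hom`s is surjective. -/
def EWtSelfZero (δ : Fin n → ℤ) : Prop :=
  ∃ (βm βp : Fin n → ℕ) (d : PP A e βm →ₗ[Aᵐᵒᵖ] PP A e βp)
    (βm' βp' : Fin n → ℕ) (d' : PP A e βm' →ₗ[Aᵐᵒᵖ] PP A e βp'),
    HasWt βm βp δ ∧ HasWt βm' βp' δ ∧
      Function.Surjective (homMap k A (Coker A e d') d)

/-- `e₁, …, e_n` is a complete set of primitive orthogonal idempotents and `A` is basic:
the indecomposable projectives `eᵢA` are pairwise non-isomorphic. -/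
def IsBasicSetup : Prop :=
  (∀ i, IsIdempotentElem (e i)) ∧
  (∀ i j, i ≠ j → e i * e j = 0) ∧
  (∑ i, e i = 1) ∧
  (∀ i, e i ≠ 0 ∧ ∀ f g : A, IsIdempotentElem f → IsIdempotentElem g →
      f * g = 0 → g * f = 0 → f + g = e i → f = 0 ∨ g = 0) ∧
  (∀ i j, i ≠ j → IsEmpty (projP A e i ≃ₗ[Aᵐᵒᵖ] projP A e j))

end Defs

end TropGP

open TropGP Module MulOpposite

/-! Writing `p : M₁ × M₂ → M₂` for the projection, dimension vectors are additive along
`0 → L ∩ M₁ → L → p(L) → 0`, so `δ(L) = δ(L ∩ M₁) + δ(p L) ≤ δ(L ∩ M₁) + f_{M₂}(δ)`.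
Taking the product of maximizers gives `f_{M₁}(δ) + f_{M₂}(δ) ≤ f_M(δ) = δ(L)`, hence
`δ(L ∩ M₁) ≥ f_{M₁}(δ)`; the reverse inequality holds because `L ∩ M₁` is a submodule of `M₁`.
Additivity holds because `eᵢ` is idempotent, which makes `N ↦ N eᵢ` exact. -/

namespace TropGP

variable {k : Type} [Field k] {A : Type} [Ring A] [Algebra k A] {n : ℕ} {e : Fin n → A}
variable {M N : Type} [AddCommGroup M] [Module k M] [Module Aᵐᵒᵖ M] [IsScalarTower k Aᵐᵒᵖ M]
  [AddCommGroup N] [Module k N] [Module Aᵐᵒᵖ N] [IsScalarTower k Aᵐᵒᵖ N]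

theorem pz_add (δ β γ : Fin n → ℤ) : pz δ (β + γ) = pz δ β + pz δ γ := by
  simp only [pz, Pi.add_apply, mul_add, Finset.sum_add_distrib]

theorem rmul_comp_restrictScalars (f : M →ₗ[Aᵐᵒᵖ] N) (i : Fin n) :
    rmul k A e N i ∘ₗ f.restrictScalars k = f.restrictScalars k ∘ₗ rmul k A e M i := by
  ext x
  exact (map_smul f _ x).symm

theorem dimVec_congr (φ : M ≃ₗ[Aᵐᵒᵖ] N) : dimVec k A e M = dimVec k A e N := by
  funext i
  let φk : M ≃ₗ[k] N := φ.restrictScalars k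
  have hrange : LinearMap.range (rmul k A e N i) =
      (LinearMap.range (rmul k A e M i)).map (φk : M →ₗ[k] N) := by
    rw [← LinearMap.range_comp, ← LinearMap.range_comp_of_range_eq_top _ φk.range]
    exact congrArg LinearMap.range (rmul_comp_restrictScalars (φ : M →ₗ[Aᵐᵒᵖ] N) i)
  rw [dimVec, dimVec, hrange, LinearEquiv.finrank_map_eq]

theorem dimVec_submodule_apply (S : Submodule Aᵐᵒᵖ M) (i : Fin n) :
    dimVec k A e S i = finrank k ((S.restrictScalars k).map (rmul k A e M i)) := by
  let ι : S →ₗ[k] M := S.subtype.restrictScalars k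
  have hmap : (LinearMap.range (rmul k A e S i)).map ι =
      (S.restrictScalars k).map (rmul k A e M i) := by
    rw [← LinearMap.range_comp, show ι ∘ₗ rmul k A e S i = rmul k A e M i ∘ₗ ι from rfl,
      LinearMap.range_comp]
    congr 1
    ext x
    simp [ι]
  rw [dimVec, ← hmap, (Submodule.equivMapOfInjective ι Subtype.val_injective _).finrank_eq]

/-- For `x ∈ Seᵢ ∩ K` idempotence gives `x = x eᵢ ∈ (S ∩ K) eᵢ`. -/
theorem map_rmul_inf {i : Fin n} (he : IsIdempotentElem (e i)) (S K : Submodule Aᵐᵒᵖ M) :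
    ((S ⊓ K).restrictScalars k).map (rmul k A e M i) =
      (S.restrictScalars k).map (rmul k A e M i) ⊓ K.restrictScalars k := by
  apply le_antisymm
  · rintro _ ⟨y, ⟨hyS, hyK⟩, rfl⟩
    exact ⟨⟨y, hyS, rfl⟩, K.smul_mem _ hyK⟩
  · rintro x ⟨⟨y, hyS, rfl⟩, hx⟩
    refine ⟨op (e i) • y, ⟨S.smul_mem _ hyS, hx⟩, ?_⟩
    change op (e i) • op (e i) • y = op (e i) • y
    rw [← mul_smul, ← op_mul, he.eq]

theorem finrank_map_add_finrank_inf_ker {K V W : Type*} [Field K] [AddCommGroup V] [Module K V]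
    [AddCommGroup W] [Module K W] [FiniteDimensional K V] (U : Submodule K V) (g : V →ₗ[K] W) :
    finrank K (U.map g) + finrank K ↥(U ⊓ LinearMap.ker g) = finrank K U := by
  have h := LinearMap.finrank_range_add_finrank_ker (g.domRestrict U)
  rwa [LinearMap.range_domRestrict, LinearMap.ker_domRestrict,
    (Submodule.equivMapOfInjective U.subtype U.injective_subtype _).finrank_eq,
    Submodule.map_comap_subtype] at h

theorem dimVec_eq_inf_ker_add_map (he : ∀ i, IsIdempotentElem (e i)) [FiniteDimensional k M]
    (S : Submodule Aᵐᵒᵖ M) (f : M →ₗ[Aᵐᵒᵖ] N) :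
    dimVec k A e S = dimVec k A e ↥(S ⊓ LinearMap.ker f) + dimVec k A e ↥(S.map f) := by
  funext i
  have hmap : ((S.map f).restrictScalars k).map (rmul k A e N i) =
      ((S.restrictScalars k).map (rmul k A e M i)).map (f.restrictScalars k) := by
    rw [Submodule.restrictScalars_map, ← Submodule.map_comp, rmul_comp_restrictScalars,
      Submodule.map_comp]
  rw [Pi.add_apply, dimVec_submodule_apply, dimVec_submodule_apply, dimVec_submodule_apply,
    map_rmul_inf (he i), hmap]
  have := finrank_map_add_finrank_inf_ker ((S.restrictScalars k).map (rmul k A e M i))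
    (f.restrictScalars k)
  rw [LinearMap.ker_restrictScalars] at this
  omega

theorem dimVec_inf_range {g : M →ₗ[Aᵐᵒᵖ] N} (hg : Function.Injective g) (S : Submodule Aᵐᵒᵖ N) :
    dimVec k A e ↥(S ⊓ LinearMap.range g) = dimVec k A e (S.comap g) :=
  dimVec_congr ((Submodule.equivMapOfInjective g hg _).trans
    (LinearEquiv.ofEq _ _ (by rw [Submodule.map_comap_eq, inf_comm]))).symm

variable [FiniteDimensional k M]

theorem dimVec_le_finrank (S : Submodule Aᵐᵒᵖ M) (i : Fin n) :
    dimVec k A e S i ≤ finrank k M := by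
  rw [dimVec_submodule_apply]
  exact_mod_cast Submodule.finrank_le _

theorem bddAbove_range_pz_dimVec (δ : Fin n → ℤ) :
    BddAbove (Set.range fun S : Submodule Aᵐᵒᵖ M => pz δ (dimVec k A e S)) := by
  have hfin : (Set.univ.pi fun _ : Fin n => Set.Icc (0 : ℤ) (finrank k M)).Finite :=
    Set.Finite.pi fun _ => Set.finite_Icc _ _
  refine ((hfin.image (pz δ)).bddAbove).mono ?_
  rintro _ ⟨S, rfl⟩
  exact ⟨dimVec k A e S, fun i _ => ⟨Int.natCast_nonneg _, dimVec_le_finrank S i⟩, rfl⟩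

theorem pz_dimVec_le_tropF (δ : Fin n → ℤ) (S : Submodule Aᵐᵒᵖ M) :
    pz δ (dimVec k A e S) ≤ tropF k A e M δ :=
  le_csSup (bddAbove_range_pz_dimVec δ) ⟨S, rfl⟩

theorem exists_pz_dimVec_eq_tropF (δ : Fin n → ℤ) :
    ∃ S : Submodule Aᵐᵒᵖ M, pz δ (dimVec k A e S) = tropF k A e M δ :=
  Int.csSup_mem (Set.range_nonempty _) (bddAbove_range_pz_dimVec δ)

variable {M₁ M₂ : Type} [AddCommGroup M₁] [Module k M₁] [Module Aᵐᵒᵖ M₁] [IsScalarTower k Aᵐᵒᵖ M₁]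
  [FiniteDimensional k M₁] [AddCommGroup M₂] [Module k M₂] [Module Aᵐᵒᵖ M₂]
  [IsScalarTower k Aᵐᵒᵖ M₂] [FiniteDimensional k M₂]

theorem tropF_add_le_tropF_prod (he : ∀ i, IsIdempotentElem (e i)) (δ : Fin n → ℤ) :
    tropF k A e M₁ δ + tropF k A e M₂ δ ≤ tropF k A e (M₁ × M₂) δ := by
  obtain ⟨L₁, hL₁⟩ := exists_pz_dimVec_eq_tropF (k := k) (A := A) (e := e) (M := M₁) δ
  obtain ⟨L₂, hL₂⟩ := exists_pz_dimVec_eq_tropF (k := k) (A := A) (e := e) (M := M₂) δ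
  calc tropF k A e M₁ δ + tropF k A e M₂ δ = pz δ (dimVec k A e (L₁.prod L₂)) := by
        rw [dimVec_eq_inf_ker_add_map he _ (LinearMap.snd Aᵐᵒᵖ M₁ M₂), LinearMap.ker_snd,
          dimVec_inf_range LinearMap.inl_injective, Submodule.prod_comap_inl,
          Submodule.prod_map_snd, pz_add, hL₁, hL₂]
    _ ≤ tropF k A e (M₁ × M₂) δ := pz_dimVec_le_tropF δ _

theorem pz_dimVec_inf_range_eq_tropF (he : ∀ i, IsIdempotentElem (e i)) {g : M₁ →ₗ[Aᵐᵒᵖ] M}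
    (hg : Function.Injective g) {p : M →ₗ[Aᵐᵒᵖ] M₂} (hgp : LinearMap.ker p = LinearMap.range g)
    {δ : Fin n → ℤ} (hadd : tropF k A e M₁ δ + tropF k A e M₂ δ ≤ tropF k A e M δ)
    {L : Submodule Aᵐᵒᵖ M} (hL : pz δ (dimVec k A e L) = tropF k A e M δ) :
    pz δ (dimVec k A e ↥(L ⊓ LinearMap.range g)) = tropF k A e M₁ δ := by
  have hsplit : pz δ (dimVec k A e L) =
      pz δ (dimVec k A e ↥(L ⊓ LinearMap.range g)) + pz δ (dimVec k A e (L.map p)) := by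
    rw [dimVec_eq_inf_ker_add_map he L p, hgp, pz_add]
  have hle₁ : pz δ (dimVec k A e ↥(L ⊓ LinearMap.range g)) ≤ tropF k A e M₁ δ := by
    rw [dimVec_inf_range hg]
    exact pz_dimVec_le_tropF δ _
  have hle₂ := pz_dimVec_le_tropF (k := k) (A := A) (e := e) δ (L.map p)
  omega

end TropGP

theorem statement11_general (k : Type) [Field k]
    (A : Type) [Ring A] [Algebra k A]
    {n : ℕ} (e : Fin n → A) (hA : IsBasicSetup A e)
    (M₁ M₂ : Type) [AddCommGroup M₁] [Module k M₁] [Module Aᵐᵒᵖ M₁]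
    [IsScalarTower k Aᵐᵒᵖ M₁] [FiniteDimensional k M₁]
    [AddCommGroup M₂] [Module k M₂] [Module Aᵐᵒᵖ M₂]
    [IsScalarTower k Aᵐᵒᵖ M₂] [FiniteDimensional k M₂]
    (δ : Fin n → ℤ) (L : Submodule Aᵐᵒᵖ (M₁ × M₂))
    (hL : pz δ (dimVec k A e L) = tropF k A e (M₁ × M₂) δ) :
    pz δ (dimVec k A e
        (L ⊓ LinearMap.range (LinearMap.inl Aᵐᵒᵖ M₁ M₂) : Submodule Aᵐᵒᵖ (M₁ × M₂))) =
      tropF k A e M₁ δ ∧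
    pz δ (dimVec k A e
        (L ⊓ LinearMap.range (LinearMap.inr Aᵐᵒᵖ M₁ M₂) : Submodule Aᵐᵒᵖ (M₁ × M₂))) =
      tropF k A e M₂ δ := by
  have he : ∀ i, IsIdempotentElem (e i) := hA.1
  have hadd := tropF_add_le_tropF_prod (k := k) (M₁ := M₁) (M₂ := M₂) he δ
  exact ⟨pz_dimVec_inf_range_eq_tropF he LinearMap.inl_injective (LinearMap.ker_snd _ _ _)
      hadd hL,
    pz_dimVec_inf_range_eq_tropF he LinearMap.inr_injective (LinearMap.ker_fst _ _ _)
      (by rwa [add_comm]) hL⟩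

/-- If `M = M₁ ⊕ M₂` and `L ⊆ M` satisfies `δ(dim L) = f_M(δ)`, then
`δ(dim (L∩M₁)) = f_{M₁}(δ)` and `δ(dim (L∩M₂)) = f_{M₂}(δ)`. -/
theorem statement11 (k : Type) [Field k] [IsAlgClosed k] [CharZero k]
    (A : Type) [Ring A] [Algebra k A] [FiniteDimensional k A]
    {n : ℕ} (e : Fin n → A) (hA : IsBasicSetup A e)
    (M₁ M₂ : Type) [AddCommGroup M₁] [Module k M₁] [Module Aᵐᵒᵖ M₁]
    [IsScalarTower k Aᵐᵒᵖ M₁] [FiniteDimensional k M₁]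
    [AddCommGroup M₂] [Module k M₂] [Module Aᵐᵒᵖ M₂]
    [IsScalarTower k Aᵐᵒᵖ M₂] [FiniteDimensional k M₂]
    (δ : Fin n → ℤ) (L : Submodule Aᵐᵒᵖ (M₁ × M₂))
    (hL : pz δ (dimVec k A e L) = tropF k A e (M₁ × M₂) δ) :
    pz δ (dimVec k A e
        (L ⊓ LinearMap.range (LinearMap.inl Aᵐᵒᵖ M₁ M₂) : Submodule Aᵐᵒᵖ (M₁ × M₂))) =
      tropF k A e M₁ δ ∧
    pz δ (dimVec k A e
        (L ⊓ LinearMap.range (LinearMap.inr Aᵐᵒᵖ M₁ M₂) : Submodule Aᵐᵒᵖ (M₁ × M₂))) =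
      tropF k A e M₂ δ :=
  statement11_general k A e hA M₁ M₂ δ L hL
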